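/- arXiv:2305.13178 — 7 statements merged into one kernel-verified Lean document; each statement's English description precedes it below -/
import Mathlib

section
/- Let N be even and let A ∈ SL(2,Z_{2N}) be A = [[1,1],[0,1]] + N·[[a+c, a+b],[c, a]] with a,b,c ∈ {0,1}. Then for every k ∈ ℕ, A^k = [[1,k],[0,1]] + N·[[ka + C(k+1,2)c, k²a + kb + C(k+1,3)c],[kc, ka + C(k,2)c]], computed in Z_{2N}. -/
open Matrix

/-- `A = [[1,1],[0,1]] + N·[[a+c, a+b],[c, a]]` over `Z_{2N}`. -/
def Amat (N a b c : ℕ) : Matrix (Fin 2) (Fin 2) (ZMod (2*N)) :=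
  !![1, 1; 0, 1] +
    (N : ZMod (2*N)) •
      !![((a + c : ℕ) : ZMod (2*N)), ((a + b : ℕ) : ZMod (2*N));
         ((c : ℕ) : ZMod (2*N)), ((a : ℕ) : ZMod (2*N))]

/-- `B = [[1,0],[-1,1]] + N·[[a', b'],[c'-a', a'-b']]` over `Z_{2N}`. -/
def Bmat (N a' b' c' : ℕ) : Matrix (Fin 2) (Fin 2) (ZMod (2*N)) :=
  !![1, 0; -1, 1] +
    (N : ZMod (2*N)) •
      !![((a' : ℕ) : ZMod (2*N)), ((b' : ℕ) : ZMod (2*N));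
         ((c' : ℕ) : ZMod (2*N)) - ((a' : ℕ) : ZMod (2*N)),
         ((a' : ℕ) : ZMod (2*N)) - ((b' : ℕ) : ZMod (2*N))]

theorem Amat_pow_aux (N a b c : ℕ) (hN : Even N) (k : ℕ) :
    (!![1, 1; 0, 1] +
    (N : ZMod (2*N)) •
      !![((a + c : ℕ) : ZMod (2*N)), ((a + b : ℕ) : ZMod (2*N));
         ((c : ℕ) : ZMod (2*N)), ((a : ℕ) : ZMod (2*N))]) ^ k =
      !![1, (k : ZMod (2*N)); 0, 1] +
        (N : ZMod (2*N)) •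
          !![((k*a + (k+1).choose 2 * c : ℕ) : ZMod (2*N)),
             ((k^2*a + k*b + (k+1).choose 3 * c : ℕ) : ZMod (2*N));
             ((k*c : ℕ) : ZMod (2*N)),
             ((k*a + k.choose 2 * c : ℕ) : ZMod (2*N))] := by
  obtain ⟨m, hm⟩ := hN
  have hn2 : (N : ZMod (2*N)) * (N : ZMod (2*N)) = 0 := by
    rw [← Nat.cast_mul, show N * N = m * (2 * N) by rw [hm]; ring,
      Nat.cast_mul, ZMod.natCast_self, mul_zero]
  induction k with
  | zero =>
    ext i j
    fin_cases i <;> fin_cases j <;> simp [pow_zero, Nat.choose]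
  | succ k ih =>
    rw [pow_succ, ih]
    have h2' : (k+1).choose 2 = k + k.choose 2 := by
      rw [Nat.choose_succ_succ, Nat.choose_one_right]
    have h2 : (k+1+1).choose 2 = (k + k.choose 2) + (k+1) := by
      rw [Nat.choose_succ_succ, Nat.choose_one_right, h2']; ring
    have h3 : (k+1+1).choose 3 = (k + k.choose 2) + (k+1).choose 3 := by
      rw [Nat.choose_succ_succ, h2']
    ext i j
    fin_cases i <;> fin_cases j <;>
      simp [Matrix.mul_apply, Fin.sum_univ_two, h2, h2', h3]
    · linear_combination (((k:ZMod (2*N))*a + (k+(k.choose 2 : ℕ))*c)*((a:ZMod (2*N))+c)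
        + ((k:ZMod (2*N))^2*a + k*b + ((k+1).choose 3 : ℕ)*c)*(c:ZMod (2*N))) * hn2
    · linear_combination (((k:ZMod (2*N))*a + (k+(k.choose 2 : ℕ))*c)*((a:ZMod (2*N))+b)
        + ((k:ZMod (2*N))^2*a + k*b + ((k+1).choose 3 : ℕ)*c)*(a:ZMod (2*N))) * hn2
    · linear_combination ((k:ZMod (2*N))*c*((a:ZMod (2*N))+c)
        + ((k:ZMod (2*N))*a + (k.choose 2 : ℕ)*c)*(c:ZMod (2*N))) * hn2
    · linear_combination ((k:ZMod (2*N))*c*((a:ZMod (2*N))+b)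
        + ((k:ZMod (2*N))*a + (k.choose 2 : ℕ)*c)*(a:ZMod (2*N))) * hn2

/-- Lemma 7.4(i): explicit formula for `A^k` in `Z_{2N}`. -/
theorem Amat_pow (N a b c : ℕ) (hN : Even N) (hNpos : 0 < N)
    (ha : a ≤ 1) (hb : b ≤ 1) (hc : c ≤ 1) (k : ℕ) :
    (Amat N a b c) ^ k =
      !![1, (k : ZMod (2*N)); 0, 1] +
        (N : ZMod (2*N)) •
          !![((k*a + (k+1).choose 2 * c : ℕ) : ZMod (2*N)),
             ((k^2*a + k*b + (k+1).choose 3 * c : ℕ) : ZMod (2*N));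
             ((k*c : ℕ) : ZMod (2*N)),
             ((k*a + k.choose 2 * c : ℕ) : ZMod (2*N))] := by
  rw [Amat]
  exact Amat_pow_aux N a b c hN k
end

section
/- Let N be even and B ∈ SL(2,Z_{2N}) be B = [[1,0],[-1,1]] + N·[[a', b'],[c'-a', a'-b']] with a',b',c' ∈ {0,1}. Then for every ℓ ∈ ℕ, B^ℓ = [[1,0],[-ℓ,1]] + N·[[ℓa' − C(ℓ,2)b', ℓb'],[−ℓ²a' + C(ℓ+1,3)b' + ℓc', ℓa' − C(ℓ+1,2)b']], computed in Z_{2N}. -/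
open Matrix

/-- Lemma 7.4(ii): explicit formula for `B^ℓ` in `Z_{2N}`. -/
theorem Bmat_pow (N a' b' c' : ℕ) (hN : Even N) (hNpos : 0 < N)
    (ha' : a' ≤ 1) (hb' : b' ≤ 1) (hc' : c' ≤ 1) (l : ℕ) :
    (Bmat N a' b' c') ^ l =
      !![1, 0; -(l : ZMod (2*N)), 1] +
        (N : ZMod (2*N)) •
          !![((l*a' : ℕ) : ZMod (2*N)) - ((l.choose 2 * b' : ℕ) : ZMod (2*N)),
             ((l*b' : ℕ) : ZMod (2*N));
             -((l^2*a' : ℕ) : ZMod (2*N)) + (((l+1).choose 3 * b' + l*c' : ℕ) : ZMod (2*N)),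
             ((l*a' : ℕ) : ZMod (2*N)) - (((l+1).choose 2 * b' : ℕ) : ZMod (2*N))] := by
  have hsq : (N : ZMod (2*N)) * N = 0 := by
    rw [← Nat.cast_mul, ZMod.natCast_eq_zero_iff]
    obtain ⟨k, rfl⟩ := hN; exact ⟨k, by ring⟩
  induction l with
  | zero =>
    simp [Matrix.one_fin_two, Nat.choose]
  | succ l ih =>
    rw [pow_succ, ih, Bmat]
    have hch2 : ((l+1).choose 2) = l.choose 2 + l := by
      rw [Nat.choose_succ_succ]; simp [Nat.add_comm]
    have hch3 : ((l+2).choose 3) = (l+1).choose 3 + (l+1).choose 2 := by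
      rw [Nat.choose_succ_succ]; ring
    have hch2' : ((l+2).choose 2) = l.choose 2 + (2*l+1) := by
      rw [Nat.choose_succ_succ, hch2]; simp [Nat.choose_one_right]; ring
    ext i j
    fin_cases i <;> fin_cases j <;>
      simp [Matrix.mul_apply, Fin.sum_univ_two, hch2, hch2', hch3] <;> push_cast <;> ring_nf <;>
      simp [show ((N:ZMod (2*N)))^2 = 0 by rw [sq]; exact hsq] <;> ring_nf
end

section
/- Let N be even and A as above with a,b,c ∈ {0,1}. If k is even then A^k = [[1,k],[0,1]] + N·(k/2)c·[[1,1],[0,1]] in Z_{2N}; if k is odd then A^k = [[1,k],[0,1]] + N·[[a + ((k+1)/2)c, a+b],[c, a + ((k-1)/2)c]] in Z_{2N}. -/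
open Matrix

/-- `N·2 = 0` in `Z_{2N}`. -/
lemma Amat_aux_h2 (N : ℕ) : (N : ZMod (2*N)) * 2 = 0 := by
  have h : ((2*N : ℕ) : ZMod (2*N)) = 0 := ZMod.natCast_self _
  push_cast at h; linear_combination h

/-- `N·N = 0` in `Z_{2N}` when `N` is even. -/
lemma Amat_aux_hs (N : ℕ) (hN : Even N) :
    (N : ZMod (2*N)) * (N : ZMod (2*N)) = 0 := by
  obtain ⟨m, rfl⟩ := hN
  have hz : ((2*(m+m) : ℕ) : ZMod (2*(m+m))) = 0 := ZMod.natCast_self _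
  push_cast at hz ⊢
  linear_combination (m : ZMod (2*(m+m))) * hz

/-- Corollary 7.6 for `A`: the formula for `A^k` according to the parity of `k`. -/
theorem Amat_pow_parity (N a b c : ℕ) (hN : Even N) (hNpos : 0 < N)
    (ha : a ≤ 1) (hb : b ≤ 1) (hc : c ≤ 1) (k : ℕ) :
    (Even k →
      (Amat N a b c) ^ k =
        !![1, (k : ZMod (2*N)); 0, 1] +
          ((N * (k/2 * c) : ℕ) : ZMod (2*N)) • !![1, 1; 0, 1]) ∧
    (Odd k →
      (Amat N a b c) ^ k =
        !![1, (k : ZMod (2*N)); 0, 1] +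
          (N : ZMod (2*N)) •
            !![((a + (k+1)/2 * c : ℕ) : ZMod (2*N)), ((a + b : ℕ) : ZMod (2*N));
               ((c : ℕ) : ZMod (2*N)), ((a + (k-1)/2 * c : ℕ) : ZMod (2*N))]) := by
  have h2 := Amat_aux_h2 N
  have hs := Amat_aux_hs N hN
  induction k with
  | zero =>
    refine ⟨fun _ => ?_, fun h => absurd h (by decide)⟩
    norm_num [pow_zero]
    ext i j
    fin_cases i <;> fin_cases j <;> simp [Matrix.one_apply]
  | succ k ih =>
    obtain ⟨ihE, ihO⟩ := ih
    constructor
    · -- Even (k+1), so k is odd, k = 2m+1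
      intro hk1
      have hk : Odd k := Nat.not_even_iff_odd.mp (Nat.even_add_one.mp hk1)
      obtain ⟨m, rfl⟩ := hk
      rw [pow_succ, ihO ⟨m, rfl⟩,
        show (2*m+1+1)/2 = m+1 from by omega,
        show (2*m+1-1)/2 = m from by omega]
      ext i j
      fin_cases i <;> fin_cases j <;>
        (simp [Amat, Matrix.mul_apply, Fin.sum_univ_two]; push_cast; ring_nf)
      · linear_combination ((a : ZMod (2*N)) + m*c + c) * h2 +
          ((a:ZMod (2*N))*m*c + 3*a*c + a^2 + m*c^2 + c*b + c^2) * hs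
      · linear_combination ((2*a : ZMod (2*N)) + a*m + b) * h2 +
          ((a:ZMod (2*N))*m*c + a*c + 2*a*b + 2*a^2 + m*c*b + c*b) * hs
      · linear_combination ((c : ZMod (2*N))) * h2 +
          ((2*(c:ZMod (2*N))*a + c^2 + c^2*m)) * hs
      · linear_combination ((a : ZMod (2*N))) * h2 +
          ((c:ZMod (2*N))*a + c*a*m + c*b + a^2) * hs
    · -- Odd (k+1), so k is even, k = m+m
      intro hk1
      have hk : Even k := by simpa using Nat.Odd.sub_odd hk1 odd_one
      obtain ⟨m, rfl⟩ := hk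
      rw [pow_succ, ihE ⟨m, rfl⟩,
        show (m+m)/2 = m from by omega,
        show (m+m+1+1)/2 = m+1 from by omega,
        show (m+m+1-1)/2 = m from by omega]
      ext i j
      fin_cases i <;> fin_cases j <;>
        (simp [Amat, Matrix.mul_apply, Fin.sum_univ_two]; push_cast; ring_nf)
      · linear_combination ((m:ZMod (2*N))*c) * h2 +
          ((m:ZMod (2*N))*c*a + 2*m*c^2) * hs
      · linear_combination ((m:ZMod (2*N))*c + m*a) * h2 +
          (2*(m:ZMod (2*N))*c*a + m*c*b) * hs
      · linear_combination ((m:ZMod (2*N))*c^2) * hs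
      · linear_combination ((m:ZMod (2*N))*c*a) * hs
end

section
/- Let N be even, A = [[1,1],[0,1]] + N·[[a+c,a+b],[c,a]] and h = (u,v) ∈ Z_N². In the semidirect product SL(2,Z_{2N}) ⋉_ψ Z_N², the element T = (A,h) satisfies T^N = ([[1,0],[0,1]] + N·[[(N/2)c, 1+(N/2)c],[0, (N/2)c]], ((N/2)v, 0)). -/
open Matrix

abbrev SL2 (m : ℕ) := Matrix.SpecialLinearGroup (Fin 2) (ZMod m)

/-- Entrywise reduction mod `N` of a matrix over `ZMod (2*N)`. -/
def redMat (N : ℕ) (M : Matrix (Fin 2) (Fin 2) (ZMod (2*N))) :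
    Matrix (Fin 2) (Fin 2) (ZMod N) :=
  M.map (ZMod.castHom (dvd_mul_left N 2) (ZMod N))

/-- Underlying set of the semidirect product `SL(2, Z_{2N}) ⋉_ψ Z_N²`. -/
abbrev SG (N : ℕ) := SL2 (2*N) × (Fin 2 → ZMod N)

/-- Multiplication of the semidirect product `SL(2, Z_{2N}) ⋉_ψ Z_N²`,
`(x,h)·(y,g) = (xy, h + [x]_N · g)`. -/
def smul' (N : ℕ) (S P : SG N) : SG N :=
  (S.1 * P.1, S.2 + (redMat N (S.1 : Matrix (Fin 2) (Fin 2) (ZMod (2*N)))).mulVec P.2)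

/-- `k`-th power in the semidirect product. -/
def spow (N : ℕ) : SG N → ℕ → SG N
  | _, 0 => (1, 0)
  | S, k+1 => smul' N S (spow N S k)

/-- Inverse in the semidirect product: `(C,w)⁻¹ = (C⁻¹, -[C⁻¹]_N · w)`. -/
def sinv (N : ℕ) (P : SG N) : SG N :=
  (P.1⁻¹, -(redMat N ((P.1⁻¹ : SL2 (2*N)) : Matrix (Fin 2) (Fin 2) (ZMod (2*N)))).mulVec P.2)

/-- The 8-element subgroup `K`. -/
def Kgrp (N : ℕ) : Set (SG N) :=
  { g | ∃ r s t : ℕ, r ≤ 1 ∧ s ≤ 1 ∧ t ≤ 1 ∧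
      (g.1 : Matrix (Fin 2) (Fin 2) (ZMod (2*N))) =
        !![((1 + N*r : ℕ) : ZMod (2*N)), ((N*s : ℕ) : ZMod (2*N));
           ((N*t : ℕ) : ZMod (2*N)), ((1 + N*r : ℕ) : ZMod (2*N))] ∧
      g.2 = ![((N/2*s : ℕ) : ZMod N), ((N/2*t : ℕ) : ZMod N)] }

lemma Amat_eq (N a b c : ℕ) :
    Amat N a b c =
      !![1 + (N : ZMod (2*N)) * ((a+c : ℕ) : ZMod (2*N)),
         1 + (N : ZMod (2*N)) * ((a+b : ℕ) : ZMod (2*N));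
         (N : ZMod (2*N)) * ((c : ℕ) : ZMod (2*N)),
         1 + (N : ZMod (2*N)) * ((a : ℕ) : ZMod (2*N))] := by
  ext i j
  fin_cases i <;> fin_cases j <;> simp [Amat]
lemma redMat_Amat (N a b c : ℕ) :
    redMat N (Amat N a b c) = !![1, 1; 0, 1] := by
  ext i j
  fin_cases i <;> fin_cases j <;>
    simp [redMat, Amat_eq, Matrix.map_apply, map_add, _root_.map_one, _root_.map_mul,
      map_natCast, ZMod.natCast_self, ZMod.cast_one (dvd_mul_left N 2)]


set_option maxHeartbeats 1600000 in
lemma key (N a b c : ℕ) (hN : Even N)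
    (A : SL2 (2*N))
    (hA : (A : Matrix (Fin 2) (Fin 2) (ZMod (2*N))) = Amat N a b c)
    (u v : ZMod N) (k : ℕ) :
    ((spow N (A, ![u, v]) k).1 : Matrix (Fin 2) (Fin 2) (ZMod (2*N))) =
      !![1 + (N : ZMod (2*N)) * ((c * k.choose 2 + (a+c)*k : ℕ) : ZMod (2*N)),
         (k : ZMod (2*N)) + (N : ZMod (2*N)) * ((c * k.choose 3 + (2*a+c) * k.choose 2 + (a+b)*k : ℕ) : ZMod (2*N));
         (N : ZMod (2*N)) * ((c*k : ℕ) : ZMod (2*N)),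
         1 + (N : ZMod (2*N)) * ((c * k.choose 2 + a*k : ℕ) : ZMod (2*N))]
    ∧ (spow N (A, ![u, v]) k).2 =
        ![(k : ZMod N) * u + ((k.choose 2 : ℕ) : ZMod N) * v, (k : ZMod N) * v] := by
  have hNN : (N : ZMod (2*N)) * (N : ZMod (2*N)) = 0 := by
    rw [← Nat.cast_mul, ZMod.natCast_eq_zero_iff]
    obtain ⟨e, he⟩ := hN
    exact ⟨e, by rw [he]; ring⟩
  induction k with
  | zero =>
    constructor
    · show ((1 : SL2 (2*N)) : Matrix (Fin 2) (Fin 2) (ZMod (2*N))) = _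
      ext i j
      fin_cases i <;> fin_cases j <;> simp
    · show (0 : Fin 2 → ZMod N) = _
      funext i
      fin_cases i <;> simp
  | succ k ih =>
    have h2 : (k+1).choose 2 = k.choose 2 + k := by
      rw [Nat.choose_succ_succ k 1, Nat.choose_one_right]; ring
    have h3 : (k+1).choose 3 = k.choose 3 + k.choose 2 := by
      rw [show (3:ℕ) = 2+1 from rfl, Nat.choose_succ_succ k 2]; ring
    have hmv : ∀ w : Fin 2 → ZMod N, (!![1,1;0,1] : Matrix (Fin 2) (Fin 2) (ZMod N)).mulVec w = ![w 0 + w 1, w 1] := by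
      intro w
      funext i
      fin_cases i <;> simp [Matrix.mulVec, dotProduct, Fin.sum_univ_two]
    simp only [spow, smul']
    constructor
    · show ((A * (spow N (A, ![u, v]) k).1 : SL2 (2*N)) : Matrix (Fin 2) (Fin 2) (ZMod (2*N))) = _
      rw [Matrix.SpecialLinearGroup.coe_mul, hA, ih.1, Amat_eq, Matrix.mul_fin_two, h2, h3]
      ext i j
      fin_cases i <;> fin_cases j
      · simp
        push_cast
        linear_combination ((((a : ℕ) : ZMod (2*N)) + ((c : ℕ) : ZMod (2*N)))*(((c : ℕ) : ZMod (2*N))*((k.choose 2 : ℕ) : ZMod (2*N)) + (((a : ℕ) : ZMod (2*N))+((c : ℕ) : ZMod (2*N)))*((k : ℕ) : ZMod (2*N))) + (((a : ℕ) : ZMod (2*N)) + ((b : ℕ) : ZMod (2*N)))*(((c : ℕ) : ZMod (2*N))*((k : ℕ) : ZMod (2*N)))) * hNN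
      · simp
        push_cast
        linear_combination ((((a : ℕ) : ZMod (2*N)) + ((c : ℕ) : ZMod (2*N)))*(((c : ℕ) : ZMod (2*N))*((k.choose 3 : ℕ) : ZMod (2*N)) + (2*((a : ℕ) : ZMod (2*N))+((c : ℕ) : ZMod (2*N)))*((k.choose 2 : ℕ) : ZMod (2*N)) + (((a : ℕ) : ZMod (2*N))+((b : ℕ) : ZMod (2*N)))*((k : ℕ) : ZMod (2*N))) + (((a : ℕ) : ZMod (2*N)) + ((b : ℕ) : ZMod (2*N)))*(((c : ℕ) : ZMod (2*N))*((k.choose 2 : ℕ) : ZMod (2*N)) + ((a : ℕ) : ZMod (2*N))*((k : ℕ) : ZMod (2*N)))) * hNN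
      · simp
        push_cast
        linear_combination (((c : ℕ) : ZMod (2*N))*(((c : ℕ) : ZMod (2*N))*((k.choose 2 : ℕ) : ZMod (2*N)) + (((a : ℕ) : ZMod (2*N))+((c : ℕ) : ZMod (2*N)))*((k : ℕ) : ZMod (2*N))) + ((a : ℕ) : ZMod (2*N))*(((c : ℕ) : ZMod (2*N))*((k : ℕ) : ZMod (2*N)))) * hNN
      · simp
        push_cast
        linear_combination (((c : ℕ) : ZMod (2*N))*(((c : ℕ) : ZMod (2*N))*((k.choose 3 : ℕ) : ZMod (2*N)) + (2*((a : ℕ) : ZMod (2*N))+((c : ℕ) : ZMod (2*N)))*((k.choose 2 : ℕ) : ZMod (2*N)) + (((a : ℕ) : ZMod (2*N))+((b : ℕ) : ZMod (2*N)))*((k : ℕ) : ZMod (2*N))) + ((a : ℕ) : ZMod (2*N))*(((c : ℕ) : ZMod (2*N))*((k.choose 2 : ℕ) : ZMod (2*N)) + ((a : ℕ) : ZMod (2*N))*((k : ℕ) : ZMod (2*N)))) * hNN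
    · show ![u,v] + (redMat N ((A : SL2 (2*N)) : Matrix (Fin 2) (Fin 2) (ZMod (2*N)))).mulVec (spow N (A, ![u, v]) k).2 = _
      rw [hA, redMat_Amat, ih.2, hmv]
      funext i
      fin_cases i <;>
        · clear ih
          simp [h2]
          push_cast
          ring

lemma two_dvd_choose_three' (e : ℕ) : 2 ∣ (2*e).choose 3 := by
  induction e with
  | zero => decide
  | succ e ih =>
    have h : (2*(e+1)).choose 3 = (2*e).choose 1 + (2*e).choose 2 + ((2*e).choose 2 + (2*e).choose 3) := by
      show (2*e+1+1).choose 3 = _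
      rw [show (3:ℕ) = 2+1 from rfl, Nat.choose_succ_succ (2*e+1) 2,
        Nat.choose_succ_succ (2*e) 1, Nat.choose_succ_succ (2*e) 2]
    rw [h, Nat.choose_one_right]
    omega


/-- Lemma 8.1 for `T`: `T^N = ...`. -/
theorem T_pow_N (N a b c : ℕ) (hN : Even N) (hNpos : 0 < N)
    (ha : a ≤ 1) (hb : b ≤ 1) (hc : c ≤ 1)
    (A : SL2 (2*N))
    (hA : (A : Matrix (Fin 2) (Fin 2) (ZMod (2*N))) = Amat N a b c)
    (u v : ZMod N) :
    ((spow N (A, ![u, v]) N).1 : Matrix (Fin 2) (Fin 2) (ZMod (2*N))) =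
        1 + (N : ZMod (2*N)) •
          !![((N/2 * c : ℕ) : ZMod (2*N)), ((1 + N/2 * c : ℕ) : ZMod (2*N));
             0, ((N/2 * c : ℕ) : ZMod (2*N))] ∧
      (spow N (A, ![u, v]) N).2 = ![((N/2 : ℕ) : ZMod N) * v, 0] := by
  obtain ⟨e, he⟩ := id hN
  have hepos : 0 < e := by omega
  have hhalf : N / 2 = e := by omega
  have hC2 : N.choose 2 + e = 2*e*e := by
    obtain ⟨e', rfl⟩ : ∃ e', e = e' + 1 := ⟨e-1, by omega⟩
    rw [Nat.choose_two_right, he]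
    have h1 : (e'+1)+(e'+1) - 1 = 2*e'+1 := by omega
    rw [h1]
    have h2 : ((e'+1)+(e'+1)) * (2*e'+1) = 2*((e'+1)*(2*e'+1)) := by ring
    rw [h2, Nat.mul_div_cancel_left _ two_pos]
    ring
  obtain ⟨m, hm⟩ : 2 ∣ N.choose 3 := by
    rw [he, show e + e = 2*e from by ring]
    exact two_dvd_choose_three' e
  obtain ⟨Mkey, Vkey⟩ := key N a b c hN A hA u v N
  have h4e : ((4*e : ℕ) : ZMod (2*N)) = 0 := by
    rw [show 4*e = 2*N from by omega, ZMod.natCast_self]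
  push_cast at h4e
  have hC2' : ((N.choose 2 : ℕ) : ZMod (2*N)) = 2*(e : ZMod (2*N))*e - e := by
    have h := congrArg (Nat.cast : ℕ → ZMod (2*N)) hC2
    push_cast at h
    linear_combination h
  have hC3' : ((N.choose 3 : ℕ) : ZMod (2*N)) = 2*(m : ZMod (2*N)) := by
    rw [hm]; push_cast; ring
  have hNe : ((N : ℕ) : ZMod (2*N)) = (e : ZMod (2*N)) + e := by
    rw [he]; push_cast; ring
  constructor
  · rw [Mkey, hhalf]
    ext i j
    fin_cases i <;> fin_cases j <;>
      · simp
        push_cast [hC2', hC3', hNe]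
        first
        | linear_combination ((e:ZMod (2*N))*e*c + e*a) * h4e
        | linear_combination ((c:ZMod (2*N))*m + (e:ZMod (2*N))*e*(2*a+c) + (e:ZMod (2*N))*b - (e:ZMod (2*N))*c) * h4e
        | linear_combination ((e:ZMod (2*N))*c) * h4e
        | linear_combination ((e:ZMod (2*N))*e*c + (a:ZMod (2*N))*e - (e:ZMod (2*N))*c) * h4e
  · rw [Vkey, hhalf]
    have h2e : ((2*e : ℕ) : ZMod N) = 0 := by
      rw [show 2*e = N from by omega, ZMod.natCast_self]
    have hC2'' : ((N.choose 2 : ℕ) : ZMod N) = 2*(e : ZMod N)*e - e := by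
      have h := congrArg (Nat.cast : ℕ → ZMod N) hC2
      push_cast at h
      linear_combination h
    have hN0 : ((N : ℕ) : ZMod N) = 0 := ZMod.natCast_self N
    push_cast at h2e
    funext i
    fin_cases i
    · simp [hN0, hC2'']
      linear_combination ((e:ZMod N)*v - v) * h2e
    · simp [hN0]
end

section
/- Let N be even with generators T = (A,(u,v)) and R = (B,(u',v')) of the semidirect product as in the setup. Then T^N ∈ K and R^N ∈ K if and only if v ≡ (N/2)c + 1 (mod 2) and u' ≡ (N/2)b' + 1 (mod 2), where K is the 8-element subgroup K = {([[1+Nr, Ns],[Nt, 1+Nr]], ((N/2)s, (N/2)t)) : r,s,t ∈ {0,1}} of SL(2,Z_{2N}) ⋉_ψ Z_N². -/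
open Matrix

/- ======================= auxiliary lemmas ======================= -/

open Finset

lemma geom_vec {K : Type*} [CommRing K] (M : Matrix (Fin 2) (Fin 2) K) (w : Fin 2 → K)
    (k : ℕ) :
    w + M.mulVec (∑ j ∈ range k, (M^j).mulVec w) = ∑ j ∈ range (k+1), (M^j).mulVec w := by
  have h : M.mulVec (∑ j ∈ range k, (M^j).mulVec w)
      = ∑ j ∈ range k, M.mulVec ((M^j).mulVec w) :=
    map_sum M.mulVecLin _ (range k)
  rw [h, Finset.sum_range_succ']
  simp only [Matrix.mulVec_mulVec, ← pow_succ']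
  simp [add_comm]

lemma spow_eq (N : ℕ) (S : SG N) (k : ℕ) :
    spow N S k = (S.1 ^ k,
      ∑ j ∈ range k, ((redMat N (S.1 : Matrix (Fin 2) (Fin 2) (ZMod (2*N)))) ^ j).mulVec S.2) := by
  induction k with
  | zero => simp [spow]
  | succ k ih =>
    rw [spow, ih, smul']
    refine Prod.ext (by simp [pow_succ']) ?_
    exact geom_vec _ _ k

lemma powC {R : Type*} [CommRing R] (n e : R) (hn2 : 2*n = 0) (hnn : n*n = 0) :
    ∀ m : ℕ, (!![1+n*e, 2+n*e; 0, 1+n*e] : Matrix (Fin 2) (Fin 2) R)^m =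
      !![1 + n*e*m, 2*m + n*e*m; 0, 1 + n*e*m] := by
  intro m
  induction m with
  | zero => simp [Matrix.one_fin_two]
  | succ m ih =>
    rw [pow_succ, ih]
    ext i j
    fin_cases i <;> fin_cases j
    · simp [Matrix.mul_apply, Fin.sum_univ_two]
      push_cast
      linear_combination (e^2*(m:R))*hnn
    · simp [Matrix.mul_apply, Fin.sum_univ_two]
      push_cast
      linear_combination (2*e*(m:R))*hn2 + (2*e^2*(m:R))*hnn
    · simp [Matrix.mul_apply, Fin.sum_univ_two]
    · simp [Matrix.mul_apply, Fin.sum_univ_two]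
      push_cast
      linear_combination (e^2*(m:R))*hnn

lemma powD {R : Type*} [CommRing R] (n e : R) (hn2 : 2*n = 0) (hnn : n*n = 0) :
    ∀ m : ℕ, (!![1+n*e, 0; -2+n*e, 1+n*e] : Matrix (Fin 2) (Fin 2) R)^m =
      !![1 + n*e*m, 0; -(2*m) + n*e*m, 1 + n*e*m] := by
  intro m
  induction m with
  | zero => simp [Matrix.one_fin_two]
  | succ m ih =>
    rw [pow_succ, ih]
    ext i j
    fin_cases i <;> fin_cases j
    · simp [Matrix.mul_apply, Fin.sum_univ_two]
      push_cast
      linear_combination (e^2*(m:R))*hnn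
    · simp [Matrix.mul_apply, Fin.sum_univ_two]
    · simp [Matrix.mul_apply, Fin.sum_univ_two]
      push_cast
      linear_combination (-2*e*(m:R))*hn2 + (2*e^2*(m:R))*hnn
    · simp [Matrix.mul_apply, Fin.sum_univ_two]
      push_cast
      linear_combination (e^2*(m:R))*hnn

section
variable (N a b c : ℕ)

lemma Asq (hn2 : (2:ZMod (2*N))*(N:ZMod (2*N)) = 0)
    (hnn : (N:ZMod (2*N))*(N:ZMod (2*N)) = 0) :
    Amat N a b c * Amat N a b c
      = !![1+(N:ZMod (2*N))*(c:ZMod (2*N)), 2+(N:ZMod (2*N))*(c:ZMod (2*N));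
           0, 1+(N:ZMod (2*N))*(c:ZMod (2*N))] := by
  set n : ZMod (2*N) := (N:ZMod (2*N))
  set α : ZMod (2*N) := (a:ZMod (2*N))
  set β : ZMod (2*N) := (b:ZMod (2*N))
  set γ : ZMod (2*N) := (c:ZMod (2*N))
  have hA : Amat N a b c = !![1+n*(α+γ), 1+n*(α+β); n*γ, 1+n*α] := by
    ext i j; fin_cases i <;> fin_cases j <;> simp [Amat] <;> push_cast <;> ring
  rw [hA]
  ext i j
  fin_cases i <;> fin_cases j
  · simp [Matrix.mul_apply, Fin.sum_univ_two]
    linear_combination (α+γ)*hn2 + ((α+γ)^2+(α+β)*γ)*hnn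
  · simp [Matrix.mul_apply, Fin.sum_univ_two]
    linear_combination (2*α+β)*hn2 + ((α+γ)*(α+β)+α*(α+β))*hnn
  · simp [Matrix.mul_apply, Fin.sum_univ_two]
    linear_combination γ*hn2 + (γ*(α+γ)+α*γ)*hnn
  · simp [Matrix.mul_apply, Fin.sum_univ_two]
    linear_combination α*hn2 + (γ*(α+β)+α^2)*hnn

lemma Bsq (hn2 : (2:ZMod (2*N))*(N:ZMod (2*N)) = 0)
    (hnn : (N:ZMod (2*N))*(N:ZMod (2*N)) = 0) :
    Bmat N a b c * Bmat N a b c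
      = !![1+(N:ZMod (2*N))*(b:ZMod (2*N)), 0;
           -2+(N:ZMod (2*N))*(b:ZMod (2*N)), 1+(N:ZMod (2*N))*(b:ZMod (2*N))] := by
  set n : ZMod (2*N) := (N:ZMod (2*N))
  set α : ZMod (2*N) := (a:ZMod (2*N))
  set β : ZMod (2*N) := (b:ZMod (2*N))
  set γ : ZMod (2*N) := (c:ZMod (2*N))
  have hB : Bmat N a b c = !![1+n*α, n*β; -1+n*(γ-α), 1+n*(α-β)] := by
    ext i j; fin_cases i <;> fin_cases j <;> simp [Bmat] <;> push_cast <;> ring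
  rw [hB]
  ext i j
  fin_cases i <;> fin_cases j
  · simp [Matrix.mul_apply, Fin.sum_univ_two]
    linear_combination (α-β)*hn2 + (α^2+β*(γ-α))*hnn
  · simp [Matrix.mul_apply, Fin.sum_univ_two]
    linear_combination β*hn2 + (β*(2*α-β))*hnn
  · simp [Matrix.mul_apply, Fin.sum_univ_two]
    linear_combination (γ-2*α)*hn2 + ((γ-α)*(2*α-β))*hnn
  · simp [Matrix.mul_apply, Fin.sum_univ_two]
    linear_combination (α-2*β)*hn2 + (β*(γ-α)+(α-β)^2)*hnn

lemma castN_modEq {x y : ℕ} (h : x ≡ y [MOD 2]) :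
    ((N*x : ℕ) : ZMod (2*N)) = ((N*y : ℕ) : ZMod (2*N)) := by
  rw [ZMod.natCast_eq_natCast_iff]
  have h2 := h.mul_left' (c := N)
  rwa [Nat.mul_comm N 2] at h2

lemma castN_modEq_rev (hN : N ≠ 0) {x y : ℕ}
    (h : ((N*x : ℕ) : ZMod (2*N)) = ((N*y : ℕ) : ZMod (2*N))) : x ≡ y [MOD 2] := by
  rw [ZMod.natCast_eq_natCast_iff, Nat.mul_comm 2 N] at h
  exact Nat.ModEq.mul_left_cancel' hN h

end

lemma castm_modEq (N m : ℕ) (hm : N = 2*m) {x y : ℕ} (h : x ≡ y [MOD 2]) :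
    ((m*x : ℕ) : ZMod N) = ((m*y : ℕ) : ZMod N) := by
  rw [ZMod.natCast_eq_natCast_iff, hm]
  have h2 := h.mul_left' (c := m)
  rwa [Nat.mul_comm m 2] at h2

lemma castm_modEq_rev (N m : ℕ) (hm : N = 2*m) (hmne : m ≠ 0) {x y : ℕ}
    (h : ((m*x : ℕ) : ZMod N) = ((m*y : ℕ) : ZMod N)) : x ≡ y [MOD 2] := by
  rw [ZMod.natCast_eq_natCast_iff, hm, Nat.mul_comm 2 m] at h
  exact Nat.ModEq.mul_left_cancel' hmne h

lemma powU (K : Type*) [CommRing K] (j : ℕ) :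
    (!![1,1;0,1] : Matrix (Fin 2) (Fin 2) K)^j = !![1,(j:K);0,1] := by
  induction j with
  | zero => simp [Matrix.one_fin_two]
  | succ j ih =>
    rw [pow_succ, ih]
    ext i k
    fin_cases i <;> fin_cases k <;> simp [Matrix.mul_apply, Fin.sum_univ_two] <;>
      push_cast <;> ring

lemma powL (K : Type*) [CommRing K] (j : ℕ) :
    (!![1,0;-1,1] : Matrix (Fin 2) (Fin 2) K)^j = !![1,0;-(j:K),1] := by
  induction j with
  | zero => simp [Matrix.one_fin_two]
  | succ j ih =>
    rw [pow_succ, ih]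
    ext i k
    fin_cases i <;> fin_cases k <;> simp [Matrix.mul_apply, Fin.sum_univ_two] <;>
      push_cast <;> ring

lemma gaussSum2 (N m : ℕ) (hm : N = 2*m) (hN : 0 < N) :
    (∑ j ∈ range N, (j : ZMod N)) = (m : ZMod N) := by
  have h0 : (∑ j ∈ range N, (j : ZMod N)) = ((∑ j ∈ range N, j : ℕ) : ZMod N) := by
    push_cast; rfl
  have h2 := Finset.sum_range_id_mul_two N
  have h1 : (∑ j ∈ range N, j) = m*(N-1) := by
    have h3 : N * (N-1) = 2*(m*(N-1)) := by rw [hm]; ring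
    omega
  rw [h0, h1]
  have hN1 : ((N-1 : ℕ) : ZMod N) = -1 := by
    have h4 : ((N - 1 : ℕ) : ZMod N) = (N : ZMod N) - 1 := by
      have h5 : (1:ℕ) ≤ N := hN
      push_cast [Nat.cast_sub h5]
      ring
    rw [h4, ZMod.natCast_self]; ring
  push_cast [hN1]
  have hmm : (m : ZMod N) * 2 = 0 := by
    have h6 : ((2*m : ℕ) : ZMod N) = 0 := by rw [← hm]; exact ZMod.natCast_self N
    push_cast at h6
    linear_combination h6
  linear_combination -hmm

lemma redA (N a b c : ℕ) : redMat N (Amat N a b c) = !![1,1;0,1] := by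
  have h : (N:ℕ) ∣ 2*N := dvd_mul_left N 2
  ext i j
  fin_cases i <;> fin_cases j <;>
    simp [redMat, Amat, Matrix.map_apply, ZMod.castHom_apply, ZMod.cast_add h,
      ZMod.cast_mul h, ZMod.cast_one h, ZMod.cast_natCast h, ZMod.natCast_self,
      ZMod.cast_neg h, ZMod.cast_sub h]

lemma redB (N a b c : ℕ) : redMat N (Bmat N a b c) = !![1,0;-1,1] := by
  have h : (N:ℕ) ∣ 2*N := dvd_mul_left N 2
  ext i j
  fin_cases i <;> fin_cases j <;>
    simp [redMat, Bmat, Matrix.map_apply, ZMod.castHom_apply, ZMod.cast_add h,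
      ZMod.cast_mul h, ZMod.cast_one h, ZMod.cast_natCast h, ZMod.natCast_self,
      ZMod.cast_neg h, ZMod.cast_sub h]

lemma memA (N m a b c : ℕ) (hm : N = 2*m) (hmpos : 0 < m)
    (A : SL2 (2*N)) (hA : (A : Matrix (Fin 2) (Fin 2) (ZMod (2*N))) = Amat N a b c)
    (u v : ZMod N) :
    spow N (A, ![u, v]) N ∈ Kgrp N ↔ v.val ≡ m * c + 1 [MOD 2] := by
  haveI : NeZero N := ⟨by omega⟩
  have hNpos : 0 < N := by omega
  have hNc : (N:ZMod (2*N)) = 2*(m:ZMod (2*N)) := by rw [hm]; push_cast; ring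
  have hn2 : (2:ZMod (2*N))*(N:ZMod (2*N)) = 0 := by
    have h := ZMod.natCast_self (2*N)
    push_cast at h
    linear_combination h
  have hnn : (N:ZMod (2*N))*(N:ZMod (2*N)) = 0 := by
    linear_combination (N:ZMod (2*N))*hNc + (m:ZMod (2*N))*hn2
  have hdiv : N/2 = m := by omega
  have hvv : ((v.val : ℕ) : ZMod N) = v := ZMod.natCast_rightInverse v
  have hApow : (Amat N a b c)^N
      = !![((1+N*(c*m) : ℕ) : ZMod (2*N)), ((N*(1+c*m) : ℕ) : ZMod (2*N));
           ((N*0 : ℕ) : ZMod (2*N)), ((1+N*(c*m) : ℕ) : ZMod (2*N))] := by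
    have h1 : (Amat N a b c)^N = (Amat N a b c * Amat N a b c)^m := by
      rw [hm, pow_mul, pow_two]
    rw [h1, Asq N a b c hn2 hnn, powC _ _ hn2 hnn]
    ext i j
    fin_cases i <;> fin_cases j <;> simp <;> push_cast <;>
      first
        | ring1
        | linear_combination -hNc
  have hterm : ∀ j : ℕ, ((!![1,1;0,1] : Matrix (Fin 2) (Fin 2) (ZMod N))^j).mulVec ![u,v]
      = ![u + (j:ZMod N)*v, v] := by
    intro j; rw [powU]
    funext i
    fin_cases i <;> simp [Matrix.mulVec, dotProduct, Fin.sum_univ_two]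
  have hVec : (∑ j ∈ range N,
        ((!![1,1;0,1] : Matrix (Fin 2) (Fin 2) (ZMod N))^j).mulVec ![u,v])
      = ![(m : ZMod N)*v, 0] := by
    rw [Finset.sum_congr rfl (fun j _ => hterm j)]
    funext i
    fin_cases i
    · rw [Finset.sum_apply]
      simp only [Fin.zero_eta, Fin.isValue, Matrix.cons_val_zero]
      rw [Finset.sum_add_distrib, Finset.sum_const, card_range, ← Finset.sum_mul,
        gaussSum2 N m hm hNpos]
      simp [nsmul_eq_mul, ZMod.natCast_self]
    · rw [Finset.sum_apply]
      simp [Finset.sum_const, card_range, nsmul_eq_mul, ZMod.natCast_self]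
  have hcoe : ((A^N : SL2 (2*N)) : Matrix (Fin 2) (Fin 2) (ZMod (2*N)))
      = (Amat N a b c)^N := by
    rw [Matrix.SpecialLinearGroup.coe_pow, hA]
  rw [spow_eq]
  rw [show ((A, ![u,v]) : SG N).1 = A from rfl, show ((A, ![u,v]) : SG N).2 = ![u,v] from rfl,
    hA, redA, hVec]
  constructor
  · rintro ⟨r, s, t, hr, hs, ht, h1, h2⟩
    rw [show (((A^N : SL2 (2*N)), ![(m : ZMod N)*v, 0]) : SG N).1 = A^N from rfl, hcoe, hApow]
      at h1
    have e01 : ((N*(1+c*m) : ℕ) : ZMod (2*N)) = ((N*s : ℕ) : ZMod (2*N)) := by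
      have h := congr_fun (congr_fun h1 0) 1
      simpa using h
    have hs2 : 1 + c*m ≡ s [MOD 2] := castN_modEq_rev N (by omega) e01
    have h2' := congr_fun h2 0
    rw [show (((A^N : SL2 (2*N)), ![(m : ZMod N)*v, 0]) : SG N).2 = ![(m : ZMod N)*v, 0]
      from rfl] at h2'
    simp only [Matrix.cons_val_zero] at h2'
    rw [hdiv] at h2'
    have e0 : ((m*v.val : ℕ) : ZMod N) = ((m*s : ℕ) : ZMod N) := by
      push_cast [hvv]
      push_cast at h2'
      linear_combination h2'
    have hv2 : v.val ≡ s [MOD 2] := castm_modEq_rev N m hm (by omega) e0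
    have : v.val ≡ 1 + c*m [MOD 2] := hv2.trans hs2.symm
    rwa [show (1 + c*m) = m*c+1 by ring] at this
  · intro hv
    refine ⟨(c*m)%2, (1+c*m)%2, 0, by omega, by omega, by omega, ?_, ?_⟩
    · rw [show (((A^N : SL2 (2*N)), ![(m : ZMod N)*v, 0]) : SG N).1 = A^N from rfl, hcoe, hApow]
      have E00 : ((1+N*(c*m) : ℕ) : ZMod (2*N)) = ((1+N*((c*m)%2) : ℕ) : ZMod (2*N)) := by
        rw [Nat.cast_add, Nat.cast_add, castN_modEq N ((Nat.mod_modEq (c*m) 2).symm)]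
      have E01 : ((N*(1+c*m) : ℕ) : ZMod (2*N)) = ((N*((1+c*m)%2) : ℕ) : ZMod (2*N)) :=
        castN_modEq N ((Nat.mod_modEq (1+c*m) 2).symm)
      rw [E00, E01]
    · rw [show (((A^N : SL2 (2*N)), ![(m : ZMod N)*v, 0]) : SG N).2 = ![(m : ZMod N)*v, 0]
        from rfl, hdiv]
      have hv' : v.val ≡ (1+c*m)%2 [MOD 2] := by
        have h := hv.trans (Nat.ModEq.refl _)
        rw [show m*c+1 = 1+c*m by ring] at h
        exact h.trans (Nat.mod_modEq (1+c*m) 2).symm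
      have F0 : (m : ZMod N)*v = ((m*((1+c*m)%2) : ℕ) : ZMod N) := by
        have h := castm_modEq N m hm hv'
        push_cast [hvv] at h
        push_cast
        linear_combination h
      rw [F0, show ((m*0 : ℕ) : ZMod N) = 0 by norm_num]

lemma memB (N m a b c : ℕ) (hm : N = 2*m) (hmpos : 0 < m)
    (B : SL2 (2*N)) (hB : (B : Matrix (Fin 2) (Fin 2) (ZMod (2*N))) = Bmat N a b c)
    (u v : ZMod N) :
    spow N (B, ![u, v]) N ∈ Kgrp N ↔ u.val ≡ m * b + 1 [MOD 2] := by
  haveI : NeZero N := ⟨by omega⟩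
  have hNpos : 0 < N := by omega
  have hNc : (N:ZMod (2*N)) = 2*(m:ZMod (2*N)) := by rw [hm]; push_cast; ring
  have hn2 : (2:ZMod (2*N))*(N:ZMod (2*N)) = 0 := by
    have h := ZMod.natCast_self (2*N)
    push_cast at h
    linear_combination h
  have hnn : (N:ZMod (2*N))*(N:ZMod (2*N)) = 0 := by
    linear_combination (N:ZMod (2*N))*hNc + (m:ZMod (2*N))*hn2
  have hdiv : N/2 = m := by omega
  have hvv : ((u.val : ℕ) : ZMod N) = u := ZMod.natCast_rightInverse u
  have hneg : -((m : ZMod N)) = (m : ZMod N) := by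
    have h6 : ((2*m : ℕ) : ZMod N) = 0 := by rw [← hm]; exact ZMod.natCast_self N
    push_cast at h6
    linear_combination -h6
  have hBpow : (Bmat N a b c)^N
      = !![((1+N*(b*m) : ℕ) : ZMod (2*N)), ((N*0 : ℕ) : ZMod (2*N));
           ((N*(1+b*m) : ℕ) : ZMod (2*N)), ((1+N*(b*m) : ℕ) : ZMod (2*N))] := by
    have h1 : (Bmat N a b c)^N = (Bmat N a b c * Bmat N a b c)^m := by
      rw [hm, pow_mul, pow_two]
    rw [h1, Bsq N a b c hn2 hnn, powD _ _ hn2 hnn]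
    ext i j
    fin_cases i <;> fin_cases j <;> simp <;> push_cast <;>
      first
        | ring1
        | linear_combination hNc - hn2
  have hterm : ∀ j : ℕ, ((!![1,0;-1,1] : Matrix (Fin 2) (Fin 2) (ZMod N))^j).mulVec ![u,v]
      = ![u, -(j:ZMod N)*u + v] := by
    intro j; rw [powL]
    funext i
    fin_cases i <;> simp [Matrix.mulVec, dotProduct, Fin.sum_univ_two]
  have hVec : (∑ j ∈ range N,
        ((!![1,0;-1,1] : Matrix (Fin 2) (Fin 2) (ZMod N))^j).mulVec ![u,v])
      = ![0, (m : ZMod N)*u] := by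
    rw [Finset.sum_congr rfl (fun j _ => hterm j)]
    funext i
    fin_cases i
    · rw [Finset.sum_apply]
      simp [Finset.sum_const, card_range, nsmul_eq_mul, ZMod.natCast_self]
    · rw [Finset.sum_apply]
      simp only [Fin.mk_one, Fin.isValue, Matrix.cons_val_one, Matrix.head_cons, Matrix.cons_val_zero]
      rw [Finset.sum_add_distrib, Finset.sum_const, card_range]
      have hs : (∑ j ∈ range N, -(j:ZMod N)*u) = (m:ZMod N)*(-u) := by
        have hc : ∀ j ∈ range N, -(j:ZMod N)*u = (j:ZMod N)*(-u) := by intro j _; ring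
        rw [Finset.sum_congr rfl hc, ← Finset.sum_mul, gaussSum2 N m hm hNpos]
      have hNsmul : (N • v) = 0 := by
        simp [nsmul_eq_mul, ZMod.natCast_self]
      rw [hs, hNsmul, add_zero, show (m:ZMod N)*(-u) = (-(m:ZMod N))*u by ring, hneg]
  have hcoe : ((B^N : SL2 (2*N)) : Matrix (Fin 2) (Fin 2) (ZMod (2*N)))
      = (Bmat N a b c)^N := by
    rw [Matrix.SpecialLinearGroup.coe_pow, hB]
  rw [spow_eq]
  rw [show ((B, ![u,v]) : SG N).1 = B from rfl, show ((B, ![u,v]) : SG N).2 = ![u,v] from rfl,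
    hB, redB, hVec]
  constructor
  · rintro ⟨r, s, t, hr, hs, ht, h1, h2⟩
    rw [show (((B^N : SL2 (2*N)), ![0, (m : ZMod N)*u]) : SG N).1 = B^N from rfl, hcoe, hBpow]
      at h1
    have e10 : ((N*(1+b*m) : ℕ) : ZMod (2*N)) = ((N*t : ℕ) : ZMod (2*N)) := by
      have h := congr_fun (congr_fun h1 1) 0
      simpa using h
    have ht2 : 1 + b*m ≡ t [MOD 2] := castN_modEq_rev N (by omega) e10
    have h2' := congr_fun h2 1
    rw [show (((B^N : SL2 (2*N)), ![0, (m : ZMod N)*u]) : SG N).2 = ![0, (m : ZMod N)*u]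
      from rfl] at h2'
    simp only [Matrix.cons_val_one, Matrix.head_cons] at h2'
    rw [hdiv] at h2'
    have e0 : ((m*u.val : ℕ) : ZMod N) = ((m*t : ℕ) : ZMod N) := by
      push_cast [hvv]
      push_cast at h2'
      linear_combination h2'
    have hu2 : u.val ≡ t [MOD 2] := castm_modEq_rev N m hm (by omega) e0
    have : u.val ≡ 1 + b*m [MOD 2] := hu2.trans ht2.symm
    rwa [show (1 + b*m) = m*b+1 by ring] at this
  · intro hu
    refine ⟨(b*m)%2, 0, (1+b*m)%2, by omega, by omega, by omega, ?_, ?_⟩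
    · rw [show (((B^N : SL2 (2*N)), ![0, (m : ZMod N)*u]) : SG N).1 = B^N from rfl, hcoe, hBpow]
      have E00 : ((1+N*(b*m) : ℕ) : ZMod (2*N)) = ((1+N*((b*m)%2) : ℕ) : ZMod (2*N)) := by
        rw [Nat.cast_add, Nat.cast_add, castN_modEq N ((Nat.mod_modEq (b*m) 2).symm)]
      have E10 : ((N*(1+b*m) : ℕ) : ZMod (2*N)) = ((N*((1+b*m)%2) : ℕ) : ZMod (2*N)) :=
        castN_modEq N ((Nat.mod_modEq (1+b*m) 2).symm)
      rw [E00, E10]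
    · rw [show (((B^N : SL2 (2*N)), ![0, (m : ZMod N)*u]) : SG N).2 = ![0, (m : ZMod N)*u]
        from rfl, hdiv]
      have hu' : u.val ≡ (1+b*m)%2 [MOD 2] := by
        have h := hu
        rw [show m*b+1 = 1+b*m by ring] at h
        exact h.trans (Nat.mod_modEq (1+b*m) 2).symm
      have F1 : (m : ZMod N)*u = ((m*((1+b*m)%2) : ℕ) : ZMod N) := by
        have h := castm_modEq N m hm hu'
        push_cast [hvv] at h
        push_cast
        linear_combination h
      rw [F1, show ((m*0 : ℕ) : ZMod N) = 0 by norm_num]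

/-- Proposition 8.2: `T^N ∈ K` and `R^N ∈ K` iff `v ≡ (N/2)c + 1 (mod 2)` and
`u' ≡ (N/2)b' + 1 (mod 2)`. -/
theorem pow_N_mem_K_iff (N a b c a' b' c' : ℕ) (hN : Even N) (hNpos : 0 < N)
    (ha : a ≤ 1) (hb : b ≤ 1) (hc : c ≤ 1)
    (ha' : a' ≤ 1) (hb' : b' ≤ 1) (hc' : c' ≤ 1)
    (A B : SL2 (2*N))
    (hA : (A : Matrix (Fin 2) (Fin 2) (ZMod (2*N))) = Amat N a b c)
    (hB : (B : Matrix (Fin 2) (Fin 2) (ZMod (2*N))) = Bmat N a' b' c')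
    (u v u' v' : ZMod N) :
    (spow N (A, ![u, v]) N ∈ Kgrp N ∧ spow N (B, ![u', v']) N ∈ Kgrp N) ↔
      (v.val ≡ N/2 * c + 1 [MOD 2] ∧ u'.val ≡ N/2 * b' + 1 [MOD 2]) := by
  obtain ⟨k, hk⟩ := hN
  have hm : N = 2*(N/2) := by omega
  have hmpos : 0 < N/2 := by omega
  rw [memA N (N/2) a b c hm hmpos A hA u v, memB N (N/2) a' b' c' hm hmpos B hB u' v']
end

section
/- Let N be even, T = (A,(u,v)), R = (B,(u',v')) in SL(2,Z_{2N}) ⋉_ψ Z_N², and 1 ≤ k,ℓ ≤ N−1 with kℓ ≡ 1 (mod N). Then the Z_N²-component of (T^k R^ℓ T^k)²·(TRT)⁻² equals (3(k²−1)v, −(ℓ²−1)u'), computed in Z_N². -/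
open Matrix

lemma redMat_mul (N : ℕ) (M1 M2 : Matrix (Fin 2) (Fin 2) (ZMod (2*N))) :
    redMat N (M1 * M2) = redMat N M1 * redMat N M2 := Matrix.map_mul

lemma redMat_one (N : ℕ) : redMat N 1 = 1 := by
  simp only [redMat]
  rw [Matrix.map_one _ (map_zero _) (map_one _)]

lemma spow_fst (N : ℕ) (S : SG N) (k : ℕ) : (spow N S k).1 = S.1 ^ k := by
  induction k with
  | zero => rfl
  | succ n ih => simp [spow, smul', ih, pow_succ']

lemma redMat_pow (N : ℕ) (S : SL2 (2*N)) (k : ℕ) :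
    redMat N ((S ^ k : SL2 (2*N)) : Matrix (Fin 2) (Fin 2) (ZMod (2*N)))
      = redMat N (S : Matrix (Fin 2) (Fin 2) (ZMod (2*N))) ^ k := by
  induction k with
  | zero => simpa using redMat_one N
  | succ n ih => rw [pow_succ, pow_succ, Matrix.SpecialLinearGroup.coe_mul, redMat_mul, ih]

lemma A_pow (N k : ℕ) : (!![1,1;0,1] : Matrix (Fin 2) (Fin 2) (ZMod N)) ^ k
    = !![1,(k:ZMod N);0,1] := by
  induction k with
  | zero => simp [Matrix.one_fin_two]
  | succ n ih => rw [pow_succ, ih, Matrix.mul_fin_two]; push_cast; ring_nf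

lemma B_pow (N k : ℕ) : (!![1,0;-1,1] : Matrix (Fin 2) (Fin 2) (ZMod N)) ^ k
    = !![1,0;-(k:ZMod N),1] := by
  induction k with
  | zero => simp [Matrix.one_fin_two]
  | succ n ih => rw [pow_succ, ih, Matrix.mul_fin_two]; push_cast; ring_nf

lemma mulVec_fin_two (N : ℕ) (a b c d x y : ZMod N) :
    (!![a,b;c,d]).mulVec ![x,y] = ![a*x+b*y, c*x+d*y] := by
  funext i; fin_cases i <;> simp [Matrix.mulVec, dotProduct, Fin.sum_univ_two]

lemma spow_T_vec (N : ℕ) (T : SG N) (u v : ZMod N)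
    (hT1 : redMat N (T.1 : Matrix (Fin 2) (Fin 2) (ZMod (2*N))) = !![1, 1; 0, 1])
    (hT2 : T.2 = ![u, v]) (k : ℕ) :
    (spow N T k).2 = ![(k:ZMod N)*u + ((Nat.choose k 2 : ℕ):ZMod N)*v, (k:ZMod N)*v] := by
  induction k with
  | zero => simp [spow]; funext i; fin_cases i <;> simp
  | succ n ih =>
    rw [spow, smul', hT2]
    simp only [ih, hT1, mulVec_fin_two]
    have h2 : Nat.choose (n+1) 2 = Nat.choose n 2 + n := by
      rw [Nat.choose_succ_succ]; simp [Nat.choose_one_right, Nat.add_comm]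
    funext i; fin_cases i <;> simp [h2] <;> push_cast <;> ring

lemma spow_R_vec (N : ℕ) (R : SG N) (u' v' : ZMod N)
    (hR1 : redMat N (R.1 : Matrix (Fin 2) (Fin 2) (ZMod (2*N))) = !![1, 0; -1, 1])
    (hR2 : R.2 = ![u', v']) (l : ℕ) :
    (spow N R l).2 = ![(l:ZMod N)*u', (l:ZMod N)*v' - ((Nat.choose l 2 : ℕ):ZMod N)*u'] := by
  induction l with
  | zero => simp [spow]; funext i; fin_cases i <;> simp
  | succ n ih =>
    rw [spow, smul', hR2]
    simp only [ih, hR1, mulVec_fin_two]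
    have h2 : Nat.choose (n+1) 2 = Nat.choose n 2 + n := by
      rw [Nat.choose_succ_succ]; simp [Nat.choose_one_right, Nat.add_comm]
    funext i; fin_cases i <;> simp [h2] <;> push_cast <;> ring

lemma two_mul_choose_two (n : ℕ) : 2 * Nat.choose n 2 = n * (n-1) := by
  rw [Nat.choose_two_right, Nat.two_mul_div_two_of_even (Nat.even_mul_pred_self n)]

/-- Lemma 10.1(iv): the `Z_N²`-component of `(T^k R^ℓ T^k)²·(TRT)⁻²` is
`(3(k²-1)v, -(ℓ²-1)u')`. -/
theorem vec_component_relation4 (N : ℕ) (hN : Even N) (hNpos : 0 < N)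
    (T R : SG N) (u v u' v' : ZMod N)
    (hT1 : redMat N (T.1 : Matrix (Fin 2) (Fin 2) (ZMod (2*N))) = !![1, 1; 0, 1])
    (hR1 : redMat N (R.1 : Matrix (Fin 2) (Fin 2) (ZMod (2*N))) = !![1, 0; -1, 1])
    (hT2 : T.2 = ![u, v]) (hR2 : R.2 = ![u', v'])
    (k l : ℕ) (hk1 : 1 ≤ k) (hk2 : k ≤ N - 1) (hl1 : 1 ≤ l) (hl2 : l ≤ N - 1)
    (hkl : k * l ≡ 1 [MOD N]) :
    (smul' N
        (spow N (smul' N (smul' N (spow N T k) (spow N R l)) (spow N T k)) 2)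
        (sinv N (spow N (smul' N (smul' N T R) T) 2))).2 =
      ![((3 * (k^2 - 1) : ℕ) : ZMod N) * v, -(((l^2 - 1 : ℕ) : ZMod N) * u')] := by
  have hm : (k : ZMod N) * (l : ZMod N) = 1 := by
    have h := (ZMod.natCast_eq_natCast_iff (k*l) 1 N).2 hkl
    push_cast at h; exact h
  have hC : 2 * ((Nat.choose k 2 : ℕ) : ZMod N) = (k:ZMod N) * k - k := by
    have h : ((2 * Nat.choose k 2 : ℕ) : ZMod N) = ((k * (k-1) : ℕ) : ZMod N) := by
      rw [two_mul_choose_two]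
    push_cast [Nat.cast_sub hk1] at h
    linear_combination h
  have hD : 2 * ((Nat.choose l 2 : ℕ) : ZMod N) = (l:ZMod N) * l - l := by
    have h : ((2 * Nat.choose l 2 : ℕ) : ZMod N) = ((l * (l-1) : ℕ) : ZMod N) := by
      rw [two_mul_choose_two]
    push_cast [Nat.cast_sub hl1] at h
    linear_combination h
  have hTk1 : redMat N (((spow N T k).1 : SL2 (2*N)) : Matrix (Fin 2) (Fin 2) (ZMod (2*N)))
      = !![1,(k:ZMod N);0,1] := by
    rw [spow_fst, redMat_pow, hT1, A_pow]
  have hRl1 : redMat N (((spow N R l).1 : SL2 (2*N)) : Matrix (Fin 2) (Fin 2) (ZMod (2*N)))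
      = !![1,0;-(l:ZMod N),1] := by
    rw [spow_fst, redMat_pow, hR1, B_pow]
  set P := smul' N (smul' N (spow N T k) (spow N R l)) (spow N T k) with hP
  set Q := smul' N (smul' N T R) T with hQ
  have hP1 : redMat N ((P.1 : SL2 (2*N)) : Matrix (Fin 2) (Fin 2) (ZMod (2*N)))
      = !![0,(k:ZMod N);-(l:ZMod N),0] := by
    simp only [hP, smul', Matrix.SpecialLinearGroup.coe_mul, redMat_mul, hTk1, hRl1,
      Matrix.mul_fin_two]
    ext i j
    fin_cases i <;> fin_cases j <;> simp <;>
      first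
        | linear_combination -hm
        | linear_combination (-(k:ZMod N))*hm
        | ring
  have hQ1 : redMat N ((Q.1 : SL2 (2*N)) : Matrix (Fin 2) (Fin 2) (ZMod (2*N)))
      = !![0,1;-1,0] := by
    simp only [hQ, smul', Matrix.SpecialLinearGroup.coe_mul, redMat_mul, hT1, hR1,
      Matrix.mul_fin_two]
    ext i j
    fin_cases i <;> fin_cases j <;> simp
  have hPv : P.2 = ![(k:ZMod N)*u + (((Nat.choose k 2 : ℕ):ZMod N) + (k:ZMod N)*k)*v
        + ((l:ZMod N) - (k:ZMod N)*((Nat.choose l 2 : ℕ):ZMod N))*u' + v',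
      -u + (2*(k:ZMod N) - (l:ZMod N)*((Nat.choose k 2 : ℕ):ZMod N))*v
        - ((Nat.choose l 2 : ℕ):ZMod N)*u' + (l:ZMod N)*v'] := by
    simp only [hP, smul', Matrix.SpecialLinearGroup.coe_mul, redMat_mul, hTk1, hRl1,
      spow_T_vec N T u v hT1 hT2 k, spow_R_vec N R u' v' hR1 hR2 l,
      Matrix.mul_fin_two, mulVec_fin_two]
    funext i
    fin_cases i <;> simp <;>
      first
        | linear_combination (-((k:ZMod N))*u - ((Nat.choose k 2 : ℕ):ZMod N)*v + v')*hm
        | linear_combination (-u)*hm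
  have hQv : Q.2 = ![u + v + u' + v', -u + 2*v + v'] := by
    simp only [hQ, smul', Matrix.SpecialLinearGroup.coe_mul, redMat_mul, hT1, hR1,
      hT2, hR2, Matrix.mul_fin_two, mulVec_fin_two]
    funext i
    fin_cases i <;> simp <;> ring
  have hvP2 : (spow N P 2).2 = P.2 + (!![0,(k:ZMod N);-(l:ZMod N),0]).mulVec P.2 := by
    simp [spow, smul', hP1]
  have hvQ2 : (spow N Q 2).2 = Q.2 + (!![0,1;-1,0] : Matrix (Fin 2) (Fin 2) (ZMod N)).mulVec Q.2 := by
    simp [spow, smul', hQ1]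
  have hP2mat : redMat N (((spow N P 2).1 : SL2 (2*N)) : Matrix (Fin 2) (Fin 2) (ZMod (2*N)))
      = !![-1,0;0,-1] := by
    rw [spow_fst, redMat_pow, hP1]
    rw [pow_two, Matrix.mul_fin_two]
    ext i j
    fin_cases i <;> fin_cases j <;> simp <;>
      first | rfl | linear_combination hm | linear_combination -hm
  have hQ2mat : redMat N (((spow N Q 2).1 : SL2 (2*N)) : Matrix (Fin 2) (Fin 2) (ZMod (2*N)))
      = !![-1,0;0,-1] := by
    rw [spow_fst, redMat_pow, hQ1]
    rw [pow_two, Matrix.mul_fin_two]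
    ext i j
    fin_cases i <;> fin_cases j <;> simp
  have hPW : redMat N (((spow N P 2).1 : SL2 (2*N)) : Matrix (Fin 2) (Fin 2) (ZMod (2*N)))
      * redMat N ((((spow N Q 2).1⁻¹ : SL2 (2*N))) : Matrix (Fin 2) (Fin 2) (ZMod (2*N))) = 1 := by
    rw [mul_eq_one_comm]
    calc redMat N (((spow N Q 2).1⁻¹ : SL2 (2*N)) : Matrix (Fin 2) (Fin 2) (ZMod (2*N)))
          * redMat N (((spow N P 2).1 : SL2 (2*N)) : Matrix (Fin 2) (Fin 2) (ZMod (2*N)))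
        = redMat N (((spow N Q 2).1⁻¹ : SL2 (2*N)) : Matrix (Fin 2) (Fin 2) (ZMod (2*N)))
          * redMat N (((spow N Q 2).1 : SL2 (2*N)) : Matrix (Fin 2) (Fin 2) (ZMod (2*N))) := by
          rw [hP2mat, hQ2mat]
      _ = redMat N ((((spow N Q 2).1⁻¹ * (spow N Q 2).1 : SL2 (2*N)))
            : Matrix (Fin 2) (Fin 2) (ZMod (2*N))) := by
          rw [Matrix.SpecialLinearGroup.coe_mul, redMat_mul]
      _ = 1 := by rw [inv_mul_cancel]; exact redMat_one N
  have hcast1 : ((3 * (k^2 - 1) : ℕ) : ZMod N) = 3*((k:ZMod N)*(k:ZMod N)) - 3 := by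
    have hk2' : 1 ≤ k^2 := Nat.one_le_pow _ _ hk1
    push_cast [Nat.cast_sub hk2']
    ring
  have hcast2 : ((l^2 - 1 : ℕ) : ZMod N) = (l:ZMod N)*(l:ZMod N) - 1 := by
    have hl2' : 1 ≤ l^2 := Nat.one_le_pow _ _ hl1
    push_cast [Nat.cast_sub hl2']
    ring
  show ((spow N P 2).2 + _) = _
  rw [hcast1, hcast2]
  simp only [smul', sinv, Matrix.mulVec_neg, Matrix.mulVec_mulVec, hPW, Matrix.one_mulVec]
  rw [hvP2, hvQ2, hPv, hQv]
  simp only [mulVec_fin_two]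
  funext i
  fin_cases i <;> simp <;>
    first
      | linear_combination (-((Nat.choose k 2 : ℕ):ZMod N)*v + v' + u'*(1-(l:ZMod N)))*hm
          + (-((k:ZMod N)*u'))*hD
      | linear_combination (-u + v*(1-2*(k:ZMod N)) + ((Nat.choose l 2 : ℕ):ZMod N)*u')*hm
          + (-((l:ZMod N)*v))*hC
end

section
/- Let N ≡ 2 (mod 4). Then the elements T = ([[1+N, 1],[N, 1]], 0) and R = ([[1, N],[-1, 1+N]], 0) of SL(2,Z_{2N}) ⋉_ψ Z_N² satisfy: (a) their matrix components reduce mod N to [[1,1],[0,1]] and [[1,0],[-1,1]]; (b) T^N, R^N ∈ K; (c) T^k R^ℓ (R^ℓ T^k)⁻¹ ∈ K whenever N = kℓ with gcd(k,ℓ) = 1; (d) (T^k R^ℓ T^k)²(TRT)⁻² ∈ K whenever 1 ≤ k,ℓ ≤ N−1 and kℓ ≡ 1 (mod N); (e) T^k R^ℓ T^k (R^ℓ T^k R^ℓ)⁻¹ ∈ K whenever 1 ≤ k,ℓ ≤ N−1 and kℓ ≡ 1 (mod N). -/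
open Matrix

/-- The element `[[1+N, 1],[N, 1]]` of `SL(2, Z_{2N})`. -/
def Tsl (N : ℕ) : SL2 (2*N) :=
  ⟨!![1 + (N : ZMod (2*N)), 1; (N : ZMod (2*N)), 1], by
    have h : ((2*N : ℕ) : ZMod (2*N)) = 0 := ZMod.natCast_self _
    push_cast at h
    simp [Matrix.det_fin_two_of]⟩

/-- The element `[[1, N],[-1, 1+N]]` of `SL(2, Z_{2N})`. -/
def Rsl (N : ℕ) : SL2 (2*N) :=
  ⟨!![1, (N : ZMod (2*N)); -1, 1 + (N : ZMod (2*N))], by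
    have h : ((2*N : ℕ) : ZMod (2*N)) = 0 := ZMod.natCast_self _
    push_cast at h
    simp [Matrix.det_fin_two_of]
    linear_combination h⟩

section AuxRing

variable {R : Type*} [CommRing R]

lemma mat2_ext {a b c d a' b' c' d' : R} (h1 : a = a') (h2 : b = b')
    (h3 : c = c') (h4 : d = d') : !![a, b; c, d] = !![a', b'; c', d'] := by
  subst h1; subst h2; subst h3; subst h4; rfl

lemma upow (x : R) : ∀ n : ℕ, (!![1, x; 0, 1]) ^ n = !![1, (n : R) * x; 0, 1]
  | 0 => by simp [Matrix.one_fin_two]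
  | n+1 => by
      rw [pow_succ, upow x n, Matrix.mul_fin_two]
      push_cast
      exact mat2_ext (by ring) (by ring) (by ring) (by ring)

lemma lpow (x : R) : ∀ n : ℕ, (!![1, 0; x, 1]) ^ n = !![1, 0; (n : R) * x, 1]
  | 0 => by simp [Matrix.one_fin_two]
  | n+1 => by
      rw [pow_succ, lpow x n, Matrix.mul_fin_two]
      push_cast
      exact mat2_ext (by ring) (by ring) (by ring) (by ring)

lemma commUL (x y : R) (h : x * y = 0) :
    !![1, x; 0, 1] * !![1, 0; -y, 1] = !![1, 0; -y, 1] * !![1, x; 0, 1] := by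
  rw [Matrix.mul_fin_two, Matrix.mul_fin_two]
  exact mat2_ext (by linear_combination -h) (by ring) (by ring) (by linear_combination h)

lemma sandwichU (x y : R) (h : x * y = 1) :
    !![1, x; 0, 1] * !![1, 0; -y, 1] * !![1, x; 0, 1] = !![0, x; -y, 0] := by
  rw [Matrix.mul_fin_two, Matrix.mul_fin_two]
  exact mat2_ext (by linear_combination -h) (by linear_combination (-x) * h)
    (by ring) (by linear_combination -h)

lemma sandwichL (x y : R) (h : x * y = 1) :
    !![1, 0; -y, 1] * !![1, x; 0, 1] * !![1, 0; -y, 1] = !![0, x; -y, 0] := by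
  rw [Matrix.mul_fin_two, Matrix.mul_fin_two]
  exact mat2_ext (by linear_combination -h) (by ring)
    (by linear_combination y * h) (by linear_combination -h)

lemma offsq (x y : R) (h : x * y = 1) :
    (!![0, x; -y, 0] : Matrix (Fin 2) (Fin 2) R) ^ 2 = -1 := by
  have hone : (-1 : Matrix (Fin 2) (Fin 2) R) = !![-1, 0; 0, -1] := by
    simp [Matrix.one_fin_two]
  rw [pow_two, Matrix.mul_fin_two, hone]
  exact mat2_ext (by linear_combination -h) (by ring) (by ring) (by linear_combination -h)

lemma mapMat2 {S : Type*} [CommRing S] (f : R →+* S) (a b c d : R) :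
    f.mapMatrix !![a, b; c, d] = !![f a, f b; f c, f d] := by
  ext i j
  fin_cases i <;> fin_cases j <;>
    simp [RingHom.mapMatrix_apply, Matrix.map_apply]

lemma pow_mod_four {M : Matrix (Fin 2) (Fin 2) R} (h : M ^ 4 = 1) (m : ℕ) :
    M ^ m = M ^ (m % 4) := by
  conv_lhs => rw [← Nat.div_add_mod m 4]
  rw [pow_add, pow_mul, h, one_pow, one_mul]

end AuxRing

section AuxPairs

lemma smul'_pair (N : ℕ) (X Y : SL2 (2*N)) :
    smul' N (X, (0 : Fin 2 → ZMod N)) (Y, 0) = (X * Y, 0) := by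
  simp [smul', Matrix.mulVec_zero]

lemma sinv_pair (N : ℕ) (X : SL2 (2*N)) :
    sinv N (X, (0 : Fin 2 → ZMod N)) = (X⁻¹, 0) := by
  simp [sinv, Matrix.mulVec_zero]

lemma spow_pair (N : ℕ) (X : SL2 (2*N)) :
    ∀ n : ℕ, spow N (X, (0 : Fin 2 → ZMod N)) n = (X ^ n, 0)
  | 0 => by simp [spow]
  | n+1 => by rw [spow, spow_pair N X n, smul'_pair, ← pow_succ']

lemma memK (N : ℕ) (g : SG N) (r : ℕ) (hr : r ≤ 1)
    (h1 : (g.1 : Matrix (Fin 2) (Fin 2) (ZMod (2*N))) =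
      !![1 + (N : ZMod (2*N)) * r, 0; 0, 1 + (N : ZMod (2*N)) * r])
    (h2 : g.2 = 0) : g ∈ Kgrp N := by
  refine ⟨r, 0, 0, hr, Nat.zero_le 1, Nat.zero_le 1, ?_, ?_⟩
  · rw [h1]
    push_cast
    exact mat2_ext rfl (by ring) (by ring) rfl
  · rw [h2]
    funext i
    fin_cases i <;> simp

end AuxPairs

/-- Theorem 12.4 (key computation): for `N ≡ 2 (mod 4)` the elements
`T = ([[1+N,1],[N,1]], 0)` and `R = ([[1,N],[-1,1+N]], 0)` satisfy (a)–(e). -/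
theorem splitting_elements_of_N_mod_four_eq_two (N : ℕ) (hN4 : N % 4 = 2) (hNpos : 0 < N) :
    (redMat N ((Tsl N : SL2 (2*N)) : Matrix (Fin 2) (Fin 2) (ZMod (2*N))) = !![1, 1; 0, 1] ∧
     redMat N ((Rsl N : SL2 (2*N)) : Matrix (Fin 2) (Fin 2) (ZMod (2*N))) = !![1, 0; -1, 1]) ∧
    (spow N (Tsl N, (0 : Fin 2 → ZMod N)) N ∈ Kgrp N ∧
     spow N (Rsl N, (0 : Fin 2 → ZMod N)) N ∈ Kgrp N) ∧
    (∀ k l : ℕ, N = k * l → Nat.gcd k l = 1 →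
      smul' N (smul' N (spow N (Tsl N, (0 : Fin 2 → ZMod N)) k)
          (spow N (Rsl N, (0 : Fin 2 → ZMod N)) l))
        (sinv N (smul' N (spow N (Rsl N, (0 : Fin 2 → ZMod N)) l)
          (spow N (Tsl N, (0 : Fin 2 → ZMod N)) k))) ∈ Kgrp N) ∧
    (∀ k l : ℕ, 1 ≤ k → k ≤ N - 1 → 1 ≤ l → l ≤ N - 1 → k * l ≡ 1 [MOD N] →
      smul' N
        (spow N (smul' N (smul' N (spow N (Tsl N, (0 : Fin 2 → ZMod N)) k)
            (spow N (Rsl N, (0 : Fin 2 → ZMod N)) l))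
          (spow N (Tsl N, (0 : Fin 2 → ZMod N)) k)) 2)
        (sinv N (spow N (smul' N (smul' N (Tsl N, (0 : Fin 2 → ZMod N))
            (Rsl N, (0 : Fin 2 → ZMod N)))
          (Tsl N, (0 : Fin 2 → ZMod N))) 2)) ∈ Kgrp N) ∧
    (∀ k l : ℕ, 1 ≤ k → k ≤ N - 1 → 1 ≤ l → l ≤ N - 1 → k * l ≡ 1 [MOD N] →
      smul' N
        (smul' N (smul' N (spow N (Tsl N, (0 : Fin 2 → ZMod N)) k)
            (spow N (Rsl N, (0 : Fin 2 → ZMod N)) l))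
          (spow N (Tsl N, (0 : Fin 2 → ZMod N)) k))
        (sinv N
          (smul' N (smul' N (spow N (Rsl N, (0 : Fin 2 → ZMod N)) l)
              (spow N (Tsl N, (0 : Fin 2 → ZMod N)) k))
            (spow N (Rsl N, (0 : Fin 2 → ZMod N)) l))) ∈ Kgrp N) := by
  -- basic arithmetic facts
  obtain ⟨q, hq⟩ : ∃ q, N = 4*q + 2 := ⟨N/4, by omega⟩
  haveI : NeZero (2*N) := ⟨by omega⟩
  have h2N : ((2*N : ℕ) : ZMod (2*N)) = 0 := ZMod.natCast_self _
  have h2η : 2 * (N : ZMod (2*N)) = 0 := by push_cast at h2N; linear_combination h2N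
  have hηη : (N : ZMod (2*N)) * (N : ZMod (2*N)) = 0 := by
    obtain ⟨m, hm⟩ : ∃ m, N = 2*m := ⟨N/2, by omega⟩
    have h : ((N*N : ℕ) : ZMod (2*N)) = 0 := by
      rw [ZMod.natCast_eq_zero_iff]
      exact ⟨m, by rw [hm]; ring⟩
    push_cast at h
    exact h
  have hd4 : (4:ℕ) ∣ 2*N := ⟨N/2, by omega⟩
  have hdh : (N/2 : ℕ) ∣ 2*N := ⟨4, by omega⟩
  set g4 : ZMod (2*N) →+* ZMod 4 := ZMod.castHom hd4 (ZMod 4) with hg4def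
  set gh : ZMod (2*N) →+* ZMod (N/2) := ZMod.castHom hdh (ZMod (N/2)) with hghdef
  set f4 : Matrix (Fin 2) (Fin 2) (ZMod (2*N)) →+* Matrix (Fin 2) (Fin 2) (ZMod 4) :=
    g4.mapMatrix with hf4def
  set fh : Matrix (Fin 2) (Fin 2) (ZMod (2*N)) →+* Matrix (Fin 2) (Fin 2) (ZMod (N/2)) :=
    gh.mapMatrix with hfhdef
  -- CRT injectivity
  have hcop : Nat.Coprime 4 (N/2) := by
    have h4 : (4:ℕ) = 2^2 := rfl
    rw [h4]
    exact Nat.Coprime.pow_left 2 (Nat.coprime_two_left.mpr ⟨N/4, by omega⟩)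
  have crt0 : ∀ x y : ZMod (2*N), g4 x = g4 y → gh x = gh y → x = y := by
    intro x y e4 eh
    have hz4 : g4 (x - y) = 0 := by rw [_root_.map_sub, e4, sub_self]
    have hzh : gh (x - y) = 0 := by rw [_root_.map_sub, eh, sub_self]
    set z := x - y with hzdef
    have hzv : ((z.val : ℕ) : ZMod (2*N)) = z := ZMod.natCast_rightInverse z
    have hdvd4 : (4:ℕ) ∣ z.val := by
      rw [← ZMod.natCast_eq_zero_iff]
      rw [← hzv, _root_.map_natCast] at hz4
      exact hz4
    have hdvdh : (N/2 : ℕ) ∣ z.val := by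
      rw [← ZMod.natCast_eq_zero_iff]
      rw [← hzv, _root_.map_natCast] at hzh
      exact hzh
    have hdvd : (2*N : ℕ) ∣ z.val := by
      have h := hcop.mul_dvd_of_dvd_of_dvd hdvd4 hdvdh
      rwa [show 4 * (N/2) = 2*N by omega] at h
    have hv0 : z.val = 0 := Nat.eq_zero_of_dvd_of_lt hdvd (ZMod.val_lt z)
    have hz0 : z = 0 := (ZMod.val_eq_zero z).mp hv0
    exact sub_eq_zero.mp hz0
  have crt : ∀ X Y : Matrix (Fin 2) (Fin 2) (ZMod (2*N)),
      f4 X = f4 Y → fh X = fh Y → X = Y := by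
    intro X Y e4 eh
    ext i j
    refine crt0 _ _ ?_ ?_
    · have h := congrFun (congrFun (congrArg (fun M => (M : Matrix (Fin 2) (Fin 2) (ZMod 4))) e4) i) j
      simpa [hf4def, RingHom.mapMatrix_apply, Matrix.map_apply] using h
    · have h := congrFun (congrFun (congrArg (fun M => (M : Matrix (Fin 2) (Fin 2) (ZMod (N/2)))) eh) i) j
      simpa [hfhdef, RingHom.mapMatrix_apply, Matrix.map_apply] using h
  -- images of the generators
  have hTm : ((Tsl N : SL2 (2*N)) : Matrix (Fin 2) (Fin 2) (ZMod (2*N))) = !![1 + (N : ZMod (2*N)), 1; (N : ZMod (2*N)), 1] := rfl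
  have hRm : ((Rsl N : SL2 (2*N)) : Matrix (Fin 2) (Fin 2) (ZMod (2*N))) = !![1, (N : ZMod (2*N)); -1, 1 + (N : ZMod (2*N))] := rfl
  have hη4 : g4 ((N:ℕ) : ZMod (2*N)) = 2 := by
    rw [_root_.map_natCast, hq]
    push_cast
    rw [show ((4:ZMod 4)) = 0 by decide]
    ring
  have hNh : ((N : ℕ) : ZMod (N/2)) = 0 := by
    rw [ZMod.natCast_eq_zero_iff]
    exact ⟨2, by omega⟩
  have hηh : gh ((N:ℕ) : ZMod (2*N)) = 0 := by
    rw [_root_.map_natCast]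
    exact hNh
  have hA4 : f4 !![1 + (N : ZMod (2*N)), 1; (N : ZMod (2*N)), 1] = !![3, 1; 2, 1] := by
    rw [hf4def, mapMat2]
    exact mat2_ext (by rw [_root_.map_add, _root_.map_one, hη4]; decide) (_root_.map_one g4) hη4 (_root_.map_one g4)
  have hB4 : f4 !![1, (N : ZMod (2*N)); -1, 1 + (N : ZMod (2*N))] = !![1, 2; 3, 3] := by
    rw [hf4def, mapMat2]
    exact mat2_ext (_root_.map_one g4) hη4 (by rw [_root_.map_neg, _root_.map_one]; decide)
      (by rw [_root_.map_add, _root_.map_one, hη4]; decide)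
  have hAh : fh !![1 + (N : ZMod (2*N)), 1; (N : ZMod (2*N)), 1] = !![1, 1; 0, 1] := by
    rw [hfhdef, mapMat2]
    exact mat2_ext (by rw [_root_.map_add, _root_.map_one, hηh]; ring) (_root_.map_one gh) hηh (_root_.map_one gh)
  have hBh : fh !![1, (N : ZMod (2*N)); -1, 1 + (N : ZMod (2*N))] = !![1, 0; -1, 1] := by
    rw [hfhdef, mapMat2]
    exact mat2_ext (_root_.map_one gh) hηh (by rw [_root_.map_neg, _root_.map_one])
      (by rw [_root_.map_add, _root_.map_one, hηh]; ring)
  have hA44 : (!![3,1;2,1] : Matrix (Fin 2) (Fin 2) (ZMod 4)) ^ 4 = 1 := by decide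
  have hB44 : (!![1,2;3,3] : Matrix (Fin 2) (Fin 2) (ZMod 4)) ^ 4 = 1 := by decide
  refine ⟨⟨?_, ?_⟩, ⟨?_, ?_⟩, ?_, ?_, ?_⟩
  -- (a1)
  · rw [hTm]
    show Matrix.map _ (ZMod.castHom (dvd_mul_left N 2) (ZMod N)) = _
    rw [← RingHom.mapMatrix_apply, mapMat2]
    exact mat2_ext (by rw [_root_.map_add, _root_.map_one, _root_.map_natCast, ZMod.natCast_self]; ring)
      (_root_.map_one _) (by rw [_root_.map_natCast, ZMod.natCast_self]) (_root_.map_one _)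
  -- (a2)
  · rw [hRm]
    show Matrix.map _ (ZMod.castHom (dvd_mul_left N 2) (ZMod N)) = _
    rw [← RingHom.mapMatrix_apply, mapMat2]
    exact mat2_ext (_root_.map_one _) (by rw [_root_.map_natCast, ZMod.natCast_self])
      (by rw [_root_.map_neg, _root_.map_one]) (by rw [_root_.map_add, _root_.map_one, _root_.map_natCast, ZMod.natCast_self]; ring)
  -- (b1)
  · rw [spow_pair]
    refine memK N _ 1 le_rfl ?_ rfl
    show ((Tsl N ^ N : SL2 (2*N)) : Matrix (Fin 2) (Fin 2) (ZMod (2*N))) = _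
    rw [Matrix.SpecialLinearGroup.coe_pow, hTm]
    refine crt _ _ ?_ ?_
    · rw [_root_.map_pow, hA4, pow_mod_four hA44, hN4]
      rw [hf4def, mapMat2]
      rw [show (g4 (1 + (N : ZMod (2*N)) * ((1:ℕ) : ZMod (2*N)))) = 3 by
        rw [_root_.map_add, _root_.map_one, _root_.map_mul, hη4, _root_.map_natCast]; decide, _root_.map_zero]
      decide
    · rw [_root_.map_pow, hAh, upow, hNh]
      rw [hfhdef, mapMat2]
      rw [show (gh (1 + (N : ZMod (2*N)) * ((1:ℕ) : ZMod (2*N)))) = 1 by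
        rw [_root_.map_add, _root_.map_one, _root_.map_mul, hηh]; ring, _root_.map_zero]
      exact mat2_ext rfl (by ring) rfl rfl
  -- (b2)
  · rw [spow_pair]
    refine memK N _ 1 le_rfl ?_ rfl
    show ((Rsl N ^ N : SL2 (2*N)) : Matrix (Fin 2) (Fin 2) (ZMod (2*N))) = _
    rw [Matrix.SpecialLinearGroup.coe_pow, hRm]
    refine crt _ _ ?_ ?_
    · rw [_root_.map_pow, hB4, pow_mod_four hB44, hN4]
      rw [hf4def, mapMat2]
      rw [show (g4 (1 + (N : ZMod (2*N)) * ((1:ℕ) : ZMod (2*N)))) = 3 by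
        rw [_root_.map_add, _root_.map_one, _root_.map_mul, hη4, _root_.map_natCast]; decide, _root_.map_zero]
      decide
    · rw [_root_.map_pow, hBh, lpow, hNh]
      rw [hfhdef, mapMat2]
      rw [show (gh (1 + (N : ZMod (2*N)) * ((1:ℕ) : ZMod (2*N)))) = 1 by
        rw [_root_.map_add, _root_.map_one, _root_.map_mul, hηh]; ring, _root_.map_zero]
      exact mat2_ext rfl rfl (by ring) rfl
  -- (c)
  · intro k l hN hgcd
    simp only [spow_pair, smul'_pair, sinv_pair]
    have key : Tsl N ^ k * Rsl N ^ l = Rsl N ^ l * Tsl N ^ k := by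
      apply Subtype.ext
      show ((Tsl N ^ k * Rsl N ^ l : SL2 (2*N)) : Matrix (Fin 2) (Fin 2) (ZMod (2*N))) =
        ((Rsl N ^ l * Tsl N ^ k : SL2 (2*N)) : Matrix (Fin 2) (Fin 2) (ZMod (2*N)))
      rw [Matrix.SpecialLinearGroup.coe_mul, Matrix.SpecialLinearGroup.coe_mul,
        Matrix.SpecialLinearGroup.coe_pow, Matrix.SpecialLinearGroup.coe_pow, hTm, hRm]
      refine crt _ _ ?_ ?_
      · rw [_root_.map_mul, _root_.map_mul, _root_.map_pow, _root_.map_pow, hA4, hB4,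
          pow_mod_four hA44, pow_mod_four hB44]
        have hmul : (k % 4) * (l % 4) % 4 = 2 := by
          rw [← Nat.mul_mod, ← hN, hN4]
        have hk4 : k % 4 = 0 ∨ k % 4 = 1 ∨ k % 4 = 2 ∨ k % 4 = 3 := by omega
        have hl4 : l % 4 = 0 ∨ l % 4 = 1 ∨ l % 4 = 2 ∨ l % 4 = 3 := by omega
        rcases hk4 with h | h | h | h <;> rcases hl4 with h' | h' | h' | h' <;>
          rw [h, h'] at hmul ⊢ <;> first | (exfalso; omega) | decide
      · rw [_root_.map_mul, _root_.map_mul, _root_.map_pow, _root_.map_pow, hAh, hBh, upow, lpow]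
        have hkl0 : ((k : ZMod (N/2))) * ((l : ZMod (N/2))) = 0 := by
          have h : ((k * l : ℕ) : ZMod (N/2)) = 0 := by rw [← hN]; exact hNh
          push_cast at h
          exact h
        rw [mul_one, mul_neg_one]
        exact commUL _ _ hkl0
    rw [key, mul_inv_cancel]
    refine memK N _ 0 (Nat.zero_le 1) ?_ rfl
    show ((1 : SL2 (2*N)) : Matrix (Fin 2) (Fin 2) (ZMod (2*N))) = _
    rw [Matrix.SpecialLinearGroup.coe_one, Matrix.one_fin_two]
    push_cast
    exact mat2_ext (by ring) rfl rfl (by ring)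
  -- (d)
  · intro k l hk1 hkN hl1 hlN hmod
    simp only [spow_pair, smul'_pair, sinv_pair]
    have h1N : 1 % N = 1 := Nat.mod_eq_of_lt (by omega)
    have hm : (k * l) % N = 1 := by
      have h := hmod
      unfold Nat.ModEq at h
      rw [h1N] at h
      exact h
    have hmodd : (k * l) % 2 = 1 := by
      have hdm := Nat.div_add_mod (k*l) N
      rw [hm] at hdm
      have h2 : (k*l) % 2 = (N * ((k*l)/N) + 1) % 2 := by rw [hdm]
      rw [Nat.add_mod (N * (k*l/N)) 1 2, Nat.mul_mod N (k*l/N) 2,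
        show N % 2 = 0 by omega] at h2
      simpa using h2
    have hkodd : k % 2 = 1 := by
      rcases (by omega : k % 2 = 0 ∨ k % 2 = 1) with h | h
      · exfalso
        have hmm := Nat.mul_mod k l 2
        rw [h] at hmm
        simp at hmm
        omega
      · exact h
    have hlodd : l % 2 = 1 := by
      rcases (by omega : l % 2 = 0 ∨ l % 2 = 1) with h | h
      · exfalso
        have hmm := Nat.mul_mod k l 2
        rw [h] at hmm
        simp at hmm
        omega
      · exact h
    have hklZ : ((k : ZMod (N/2))) * ((l : ZMod (N/2))) = 1 := by
      have hdm := Nat.div_add_mod (k*l) N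
      rw [hm] at hdm
      have h : ((k * l : ℕ) : ZMod (N/2)) = 1 := by
        rw [← hdm]
        push_cast
        rw [hNh]
        ring
      push_cast at h
      exact h
    have h11 : (1 : ZMod (N/2)) * 1 = 1 := mul_one 1
    have key2 : (Tsl N ^ k * Rsl N ^ l * Tsl N ^ k) ^ 2 =
        (Tsl N * Rsl N * Tsl N) ^ 2 := by
      apply Subtype.ext
      show ((_ : SL2 (2*N)) : Matrix (Fin 2) (Fin 2) (ZMod (2*N))) =
        ((_ : SL2 (2*N)) : Matrix (Fin 2) (Fin 2) (ZMod (2*N)))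
      simp only [Matrix.SpecialLinearGroup.coe_pow, Matrix.SpecialLinearGroup.coe_mul, hTm, hRm]
      refine crt _ _ ?_ ?_
      · simp only [_root_.map_pow, _root_.map_mul, hA4, hB4]
        rw [pow_mod_four hA44 k, pow_mod_four hB44 l]
        rcases (by omega : k % 4 = 1 ∨ k % 4 = 3) with h | h <;>
          rcases (by omega : l % 4 = 1 ∨ l % 4 = 3) with h' | h' <;>
          rw [h, h'] <;> decide
      · simp only [_root_.map_pow, _root_.map_mul, hAh, hBh]
        rw [upow, lpow, mul_one, mul_neg_one]
        rw [sandwichU _ _ hklZ, offsq _ _ hklZ]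
        rw [sandwichU _ _ h11, offsq _ _ h11]
    rw [key2, mul_inv_cancel]
    refine memK N _ 0 (Nat.zero_le 1) ?_ rfl
    show ((1 : SL2 (2*N)) : Matrix (Fin 2) (Fin 2) (ZMod (2*N))) = _
    rw [Matrix.SpecialLinearGroup.coe_one, Matrix.one_fin_two]
    push_cast
    exact mat2_ext (by ring) rfl rfl (by ring)
  -- (e)
  · intro k l hk1 hkN hl1 hlN hmod
    simp only [spow_pair, smul'_pair, sinv_pair]
    have h1N : 1 % N = 1 := Nat.mod_eq_of_lt (by omega)
    have hm : (k * l) % N = 1 := by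
      have h := hmod
      unfold Nat.ModEq at h
      rw [h1N] at h
      exact h
    have hmodd : (k * l) % 2 = 1 := by
      have hdm := Nat.div_add_mod (k*l) N
      rw [hm] at hdm
      have h2 : (k*l) % 2 = (N * ((k*l)/N) + 1) % 2 := by rw [hdm]
      rw [Nat.add_mod (N * (k*l/N)) 1 2, Nat.mul_mod N (k*l/N) 2,
        show N % 2 = 0 by omega] at h2
      simpa using h2
    have hkodd : k % 2 = 1 := by
      rcases (by omega : k % 2 = 0 ∨ k % 2 = 1) with h | h
      · exfalso
        have hmm := Nat.mul_mod k l 2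
        rw [h] at hmm
        simp at hmm
        omega
      · exact h
    have hlodd : l % 2 = 1 := by
      rcases (by omega : l % 2 = 0 ∨ l % 2 = 1) with h | h
      · exfalso
        have hmm := Nat.mul_mod k l 2
        rw [h] at hmm
        simp at hmm
        omega
      · exact h
    have hklZ : ((k : ZMod (N/2))) * ((l : ZMod (N/2))) = 1 := by
      have hdm := Nat.div_add_mod (k*l) N
      rw [hm] at hdm
      have h : ((k * l : ℕ) : ZMod (N/2)) = 1 := by
        rw [← hdm]
        push_cast
        rw [hNh]
        ring
      push_cast at h
      exact h
    set r : ℕ := (k/2 + l/2) % 2 with hrdef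
    have hrle : r ≤ 1 := by omega
    have hdetS : (!![1 + (N : ZMod (2*N)) * r, 0; 0, 1 + (N : ZMod (2*N)) * r] : Matrix (Fin 2) (Fin 2) (ZMod (2*N))).det = 1 := by
      rw [Matrix.det_fin_two_of]
      have h0 : (2:ZMod (2*N)) * (N : ZMod (2*N)) * r = 0 := by rw [h2η]; ring
      linear_combination h0 + ((r : ZMod (2*N)) * (r : ZMod (2*N))) * hηη
    obtain ⟨S, hSm⟩ : ∃ S : SL2 (2*N),
        (S : Matrix (Fin 2) (Fin 2) (ZMod (2*N))) = !![1 + (N : ZMod (2*N)) * r, 0; 0, 1 + (N : ZMod (2*N)) * r] :=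
      ⟨⟨_, hdetS⟩, rfl⟩
    have hS4 : f4 !![1 + (N : ZMod (2*N)) * r, 0; 0, 1 + (N : ZMod (2*N)) * r] =
        !![1 + 2 * (r : ZMod 4), 0; 0, 1 + 2 * (r : ZMod 4)] := by
      rw [hf4def, mapMat2]
      exact mat2_ext (by rw [_root_.map_add, _root_.map_one, _root_.map_mul, hη4, _root_.map_natCast]) (_root_.map_zero g4)
        (_root_.map_zero g4) (by rw [_root_.map_add, _root_.map_one, _root_.map_mul, hη4, _root_.map_natCast])
    have hSh : fh !![1 + (N : ZMod (2*N)) * r, 0; 0, 1 + (N : ZMod (2*N)) * r] = 1 := by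
      rw [hfhdef, mapMat2, Matrix.one_fin_two]
      exact mat2_ext (by rw [_root_.map_add, _root_.map_one, _root_.map_mul, hηh]; ring) (_root_.map_zero gh)
        (_root_.map_zero gh) (by rw [_root_.map_add, _root_.map_one, _root_.map_mul, hηh]; ring)
    have key : Tsl N ^ k * Rsl N ^ l * Tsl N ^ k =
        S * (Rsl N ^ l * Tsl N ^ k * Rsl N ^ l) := by
      apply Subtype.ext
      show ((_ : SL2 (2*N)) : Matrix (Fin 2) (Fin 2) (ZMod (2*N))) =
        ((_ : SL2 (2*N)) : Matrix (Fin 2) (Fin 2) (ZMod (2*N)))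
      simp only [Matrix.SpecialLinearGroup.coe_mul, Matrix.SpecialLinearGroup.coe_pow,
        hTm, hRm, hSm]
      refine crt _ _ ?_ ?_
      · simp only [_root_.map_mul, _root_.map_pow, hA4, hB4, hS4]
        rw [pow_mod_four hA44 k, pow_mod_four hB44 l]
        rcases (by omega : k % 4 = 1 ∨ k % 4 = 3) with h | h <;>
          rcases (by omega : l % 4 = 1 ∨ l % 4 = 3) with h' | h'
        · rw [h, h', show r = 0 by omega]
          decide
        · rw [h, h', show r = 1 by omega]
          decide
        · rw [h, h', show r = 1 by omega]
          decide
        · rw [h, h', show r = 0 by omega]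
          decide
      · simp only [_root_.map_mul, _root_.map_pow, hAh, hBh, hSh]
        rw [upow, lpow, mul_one, mul_neg_one, one_mul]
        rw [sandwichU _ _ hklZ, sandwichL _ _ hklZ]
    rw [key, mul_assoc, mul_inv_cancel, mul_one]
    refine memK N _ r hrle ?_ rfl
    rw [hSm]
end
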